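/- arXiv:1404.6652 — 2 statements merged into one kernel-verified Lean document; each statement's English description precedes it below -/
import Mathlib

section
/- Let φ, ψ be smooth functions on a Riemannian manifold satisfying |dφ|² = |dψ|² and ⟨dφ, dψ⟩ = 0, written in coordinates where φ(s,ρ,θ) = s and ψ(s,ρ,θ) = ρ with the metric of the form ds² + dρ² + h(ρ,θ)dθ². Then a smooth function a solves the transport equation 2⟨d(φ+iψ), da⟩_g + Δ_g(φ+iψ)·a = 0 if and only if (∂_s + i∂_ρ)(|g|^{1/4}·a) = 0, where |g| is the determinant of the metric in these coordinates. -/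
noncomputable section

open Complex

/-- Coordinates `(s, ρ, θ) ∈ ℝ × ℝ × ℝᵐ`; partial derivative in `s`. -/
def dS {m : ℕ} (f : ℝ × ℝ × (Fin m → ℝ) → ℂ) (p : ℝ × ℝ × (Fin m → ℝ)) : ℂ :=
  fderiv ℝ f p (1, 0, 0)

/-- Partial derivative in `ρ`. -/
def dR {m : ℕ} (f : ℝ × ℝ × (Fin m → ℝ) → ℂ) (p : ℝ × ℝ × (Fin m → ℝ)) : ℂ :=
  fderiv ℝ f p (0, 1, 0)

/-- Partial derivative in `θ_j`. -/
def dT {m : ℕ} (j : Fin m) (f : ℝ × ℝ × (Fin m → ℝ) → ℂ) (p : ℝ × ℝ × (Fin m → ℝ)) : ℂ :=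
  fderiv ℝ f p (0, 0, Pi.single j 1)

/-- The Laplace–Beltrami operator for a metric of the form
`ds² + dρ² + h(ρ,θ)dθ²`, where `hInv` is the inverse of `h` and `detg(ρ,θ)` is the
metric determinant (independent of `s`). -/
def lapProd {m : ℕ} (hInv : ℝ × (Fin m → ℝ) → Matrix (Fin m) (Fin m) ℝ)
    (detg : ℝ × (Fin m → ℝ) → ℝ) (f : ℝ × ℝ × (Fin m → ℝ) → ℂ)
    (p : ℝ × ℝ × (Fin m → ℝ)) : ℂ :=
  ((Real.sqrt (detg p.2) : ℂ))⁻¹ *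
    (dS (fun y => (Real.sqrt (detg y.2) : ℂ) * dS f y) p +
      dR (fun y => (Real.sqrt (detg y.2) : ℂ) * dR f y) p +
      ∑ j : Fin m, dT j
        (fun y => (Real.sqrt (detg y.2) : ℂ) * ∑ k : Fin m, (hInv y.2 j k : ℂ) * dT k f y) p)

/-- The complex-bilinear inner product of differentials for `ds² + dρ² + h(ρ,θ)dθ²`. -/
def coInnerProd {m : ℕ} (hInv : ℝ × (Fin m → ℝ) → Matrix (Fin m) (Fin m) ℝ)
    (f h : ℝ × ℝ × (Fin m → ℝ) → ℂ) (p : ℝ × ℝ × (Fin m → ℝ)) : ℂ :=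
  dS f p * dS h p + dR f p * dR h p +
    ∑ j : Fin m, ∑ k : Fin m, (hInv p.2 j k : ℂ) * dT j f p * dT k h p

/-- In coordinates where `φ = s`, `ψ = ρ` and `g = ds² + dρ² + h(ρ,θ)dθ²`, the transport
equation `2⟨d(φ+iψ), da⟩_g + Δ_g(φ+iψ)·a = 0` is equivalent to
`(∂_s + i∂_ρ)(|g|^{1/4} a) = 0`. -/
theorem transport_equation_equivalence {m : ℕ}
    (Ω : Set (ℝ × ℝ × (Fin m → ℝ))) (hΩ : IsOpen Ω)
    (hInv : ℝ × (Fin m → ℝ) → Matrix (Fin m) (Fin m) ℝ)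
    (detg : ℝ × (Fin m → ℝ) → ℝ)
    (hhInv : ∀ j k, ContDiff ℝ (⊤ : ℕ∞) fun y => hInv y j k)
    (hdetg : ContDiff ℝ (⊤ : ℕ∞) detg) (hdetpos : ∀ y, 0 < detg y)
    (φ ψ : ℝ × ℝ × (Fin m → ℝ) → ℝ)
    (hφ : ∀ p : ℝ × ℝ × (Fin m → ℝ), φ p = p.1)
    (hψ : ∀ p : ℝ × ℝ × (Fin m → ℝ), ψ p = p.2.1)
    (a : ℝ × ℝ × (Fin m → ℝ) → ℂ) (ha : ContDiff ℝ (⊤ : ℕ∞) a) :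
    (∀ p ∈ Ω,
      2 * coInnerProd hInv (fun y => (φ y : ℂ) + Complex.I * (ψ y : ℂ)) a p +
        lapProd hInv detg (fun y => (φ y : ℂ) + Complex.I * (ψ y : ℂ)) p * a p = 0)
      ↔
    (∀ p ∈ Ω,
      dS (fun y => ((detg y.2 ^ ((1 : ℝ) / 4) : ℝ) : ℂ) * a y) p +
        Complex.I * dR (fun y => ((detg y.2 ^ ((1 : ℝ) / 4) : ℝ) : ℂ) * a y) p = 0) := by
  have hdet : Differentiable ℝ detg := hdetg.differentiable (by simp)
  have ha' : Differentiable ℝ a := ha.differentiable (by simp)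
  -- the phase function as a continuous linear map
  set L₀ : (ℝ × ℝ × (Fin m → ℝ)) →L[ℝ] ℂ :=
    Complex.ofRealCLM.comp (ContinuousLinearMap.fst ℝ ℝ (ℝ × (Fin m → ℝ))) +
      Complex.I • (Complex.ofRealCLM.comp
        ((ContinuousLinearMap.fst ℝ ℝ (Fin m → ℝ)).comp
          (ContinuousLinearMap.snd ℝ ℝ (ℝ × (Fin m → ℝ))))) with hL₀
  have hL₀e : ∀ v : ℝ × ℝ × (Fin m → ℝ), L₀ v = (v.1 : ℂ) + Complex.I * (v.2.1 : ℂ) := by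
    intro v; simp [hL₀, smul_eq_mul]
  have hfL : (fun y : ℝ × ℝ × (Fin m → ℝ) => (φ y : ℂ) + Complex.I * (ψ y : ℂ))
      = fun y => L₀ y := by
    funext y; rw [hL₀e, hφ, hψ]
  rw [hfL]
  have hfd : ∀ y : ℝ × ℝ × (Fin m → ℝ), fderiv ℝ (fun y => L₀ y) y = L₀ := fun y => L₀.fderiv
  have hdSf : ∀ y : ℝ × ℝ × (Fin m → ℝ), dS (fun y => L₀ y) y = 1 := by
    intro y; rw [dS, hfd, hL₀e]; norm_num
  have hdRf : ∀ y : ℝ × ℝ × (Fin m → ℝ), dR (fun y => L₀ y) y = Complex.I := by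
    intro y; rw [dR, hfd, hL₀e]; norm_num
  have hdTf : ∀ (k : Fin m) (y : ℝ × ℝ × (Fin m → ℝ)), dT k (fun y => L₀ y) y = 0 := by
    intro k y; rw [dT, hfd, hL₀e]; norm_num
  -- the fourth root of the determinant
  set Q : ℝ × (Fin m → ℝ) → ℝ := fun z => detg z ^ ((1 : ℝ) / 4) with hQdef
  have hQ : Differentiable ℝ Q := fun z => (hdet z).rpow_const (Or.inl (hdetpos z).ne')
  have hQpos : ∀ z, 0 < Q z := fun z => Real.rpow_pos_of_pos (hdetpos z) _
  have hsq : ∀ z, Real.sqrt (detg z) = Q z ^ 2 := by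
    intro z
    rw [hQdef, ← Real.rpow_natCast (detg z ^ ((1:ℝ)/4)) 2, ← Real.rpow_mul (hdetpos z).le,
      Real.sqrt_eq_rpow]
    norm_num
  set qC : ℝ × ℝ × (Fin m → ℝ) → ℂ := fun y => ((Q y.2 : ℝ) : ℂ) with hqCdef
  have hqC : ∀ y : ℝ × ℝ × (Fin m → ℝ), HasFDerivAt qC
      (Complex.ofRealCLM.comp ((fderiv ℝ Q y.2).comp
        (ContinuousLinearMap.snd ℝ ℝ (ℝ × (Fin m → ℝ))))) y := by
    intro y
    exact Complex.ofRealCLM.hasFDerivAt.comp y (((hQ y.2).hasFDerivAt).comp y (hasFDerivAt_snd))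
  have hqCd : Differentiable ℝ qC := fun y => (hqC y).differentiableAt
  have hqCval : ∀ (y v : ℝ × ℝ × (Fin m → ℝ)),
      fderiv ℝ qC y v = ((fderiv ℝ Q y.2 v.2 : ℝ) : ℂ) := by
    intro y v; rw [(hqC y).fderiv]; rfl
  have hsC : ∀ y : ℝ × ℝ × (Fin m → ℝ),
      ((Real.sqrt (detg y.2) : ℝ) : ℂ) = qC y * qC y := by
    intro y; rw [hsq]; push_cast [hqCdef]; ring
  refine forall₂_congr fun p _ => ?_
  set q : ℂ := qC p with hq
  set D : ℂ := ((fderiv ℝ Q p.2 ((1:ℝ), (0 : Fin m → ℝ)) : ℝ) : ℂ) with hD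
  have hqne : q ≠ 0 := by
    rw [hq, hqCdef]
    simpa using (hQpos p.2).ne'
  -- directional derivatives of products q * q and q * a
  have hmul : ∀ (f : ℝ × ℝ × (Fin m → ℝ) → ℂ) (_ : DifferentiableAt ℝ f p)
      (v : ℝ × ℝ × (Fin m → ℝ)),
      fderiv ℝ (fun y => qC y * f y) p v
        = ((fderiv ℝ Q p.2 v.2 : ℝ) : ℂ) * f p + qC p * fderiv ℝ f p v := by
    intro f hf v
    rw [fderiv_fun_mul (hqCd p) hf]
    simp [hqCval, smul_eq_mul]
    ring
  have hz1 : (((1:ℝ), (0:ℝ), (0 : Fin m → ℝ)) : ℝ × ℝ × (Fin m → ℝ)).2 = 0 := rfl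
  have hz2 : (((0:ℝ), (1:ℝ), (0 : Fin m → ℝ)) : ℝ × ℝ × (Fin m → ℝ)).2
      = ((1:ℝ), (0 : Fin m → ℝ)) := rfl
  -- inner product term
  have hA : coInnerProd hInv (fun y => L₀ y) a p = dS a p + Complex.I * dR a p := by
    rw [coInnerProd, hdSf, hdRf]
    simp [hdTf]
  -- Laplacian term
  have hB : lapProd hInv detg (fun y => L₀ y) p = 2 * Complex.I * D / q := by
    rw [lapProd]
    have e1 : (fun y : ℝ × ℝ × (Fin m → ℝ) =>
        ((Real.sqrt (detg y.2) : ℝ) : ℂ) * dS (fun y => L₀ y) y) = fun y => qC y * qC y := by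
      funext y; rw [hdSf, mul_one, hsC]
    have e2 : (fun y : ℝ × ℝ × (Fin m → ℝ) =>
        ((Real.sqrt (detg y.2) : ℝ) : ℂ) * dR (fun y => L₀ y) y)
          = fun y => qC y * (qC y * Complex.I) := by
      funext y; rw [hdRf, hsC]; ring
    have e3 : ∀ j : Fin m, (fun y : ℝ × ℝ × (Fin m → ℝ) =>
        ((Real.sqrt (detg y.2) : ℝ) : ℂ) *
          ∑ k : Fin m, (hInv y.2 j k : ℂ) * dT k (fun y => L₀ y) y) = fun _ => 0 := by
      intro j; funext y; simp [hdTf]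
    rw [e1, e2]
    have t1 : dS (fun y => qC y * qC y) p = 0 := by
      rw [dS, hmul qC (hqCd p) _, hqCval, hz1]
      simp
    have t2 : dR (fun y => qC y * (qC y * Complex.I)) p = 2 * q * D * Complex.I := by
      have hdiff : DifferentiableAt ℝ (fun y => qC y * Complex.I) p := (hqCd p).mul_const _
      rw [dR, hmul _ hdiff _, hz2]
      have : fderiv ℝ (fun y => qC y * Complex.I) p (((0:ℝ), (1:ℝ), (0 : Fin m → ℝ)))
          = D * Complex.I := by
        rw [fderiv_mul_const (hqCd p)]
        simp [hqCval, hz2, smul_eq_mul, hD]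
        ring
      rw [this, hD, hq]
      ring
    have t3 : ∀ j : Fin m, dT j (fun y : ℝ × ℝ × (Fin m → ℝ) =>
        ((Real.sqrt (detg y.2) : ℝ) : ℂ) *
          ∑ k : Fin m, (hInv y.2 j k : ℂ) * dT k (fun y => L₀ y) y) p = 0 := by
      intro j; rw [e3 j, dT]; simp
    rw [t1, t2]
    rw [Finset.sum_congr rfl fun j _ => t3 j]
    rw [hsC p]
    rw [← hq]
    rw [Finset.sum_const_zero]
    field_simp
    ring
  -- derivatives of q * a
  have hC : dS (fun y => ((detg y.2 ^ ((1 : ℝ) / 4) : ℝ) : ℂ) * a y) p = q * dS a p := by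
    show dS (fun y => qC y * a y) p = q * dS a p
    rw [dS, hmul a (ha' p) _, hz1]
    simp [dS, hq]
  have hDr : dR (fun y => ((detg y.2 ^ ((1 : ℝ) / 4) : ℝ) : ℂ) * a y) p
      = D * a p + q * dR a p := by
    show dR (fun y => qC y * a y) p = D * a p + q * dR a p
    rw [dR, hmul a (ha' p) _, hz2, ← hD, ← hq]
    rfl
  rw [hA, hB, hC, hDr]
  have key : q * (2 * (dS a p + Complex.I * dR a p) + 2 * Complex.I * D / q * a p)
      = 2 * (q * dS a p + Complex.I * (D * a p + q * dR a p)) := by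
    field_simp
    ring
  constructor
  · intro h
    have h2 : (2:ℂ) * (q * dS a p + Complex.I * (D * a p + q * dR a p)) = 0 := by
      rw [← key, h, mul_zero]
    exact (mul_eq_zero.mp h2).resolve_left two_ne_zero
  · intro h
    have h2 : q * (2 * (dS a p + Complex.I * dR a p) + 2 * Complex.I * D / q * a p) = 0 := by
      rw [key, h, mul_zero]
    exact (mul_eq_zero.mp h2).resolve_left hqne

end
end

section
/- Let H be a Hilbert space and F : {ζ ∈ ℂ : Im ζ ≥ 0} → H weakly continuous and weakly holomorphic in the interior, with ‖F(σ)‖ ≤ m for all real σ with |σ| ≤ δ (where 0 < m < 1, δ > 0) and ‖F(σ + iη)‖ ≤ C·e^{Sη} for all σ ∈ ℝ, η ≥ 0 (with C ≥ 1, S ≥ 0). Then for all real σ, ‖F(σ + i)‖ ≤ C·e^S·m^{(1/π)(arctan(σ+δ) - arctan(σ-δ))}. -/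
open Real Complex


lemma aux_arg (x : ℝ) : Complex.arg ((x : ℂ) + Complex.I) = π / 2 - Real.arctan x := by
  have hz : (x : ℂ) + Complex.I ≠ 0 := by
    intro h
    have := congrArg Complex.im h
    simp at this
  have habs : ‖(x : ℂ) + Complex.I‖ = Real.sqrt (1 + x ^ 2) := by
    rw [Complex.norm_def, Complex.normSq_apply]
    simp
    ring_nf
  have h1 : Real.cos (Complex.arg ((x : ℂ) + Complex.I)) = x / Real.sqrt (1 + x ^ 2) := by
    rw [Complex.cos_arg hz, habs]
    simp
  have h2 : Real.cos (π / 2 - Real.arctan x) = x / Real.sqrt (1 + x ^ 2) := by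
    rw [Real.cos_pi_div_two_sub, Real.sin_arctan]
  have hb1 : Complex.arg ((x : ℂ) + Complex.I) ∈ Set.Icc 0 π := by
    refine ⟨Complex.arg_nonneg_iff.2 (by simp), Complex.arg_le_pi _⟩
  have hb2 : π / 2 - Real.arctan x ∈ Set.Icc 0 π := by
    have := Real.arctan_lt_pi_div_two x
    have := Real.neg_pi_div_two_lt_arctan x
    constructor <;> [linarith; linarith]
  exact Real.injOn_cos hb1 hb2 (h1.trans h2.symm)


lemma aux_log_cwa (a : ℝ) {ζ : ℂ} (hζ : 0 ≤ ζ.im) (hne : ζ ≠ (a : ℂ)) :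
    ContinuousWithinAt (fun x : ℂ => Complex.log (x - (a : ℂ))) {z : ℂ | 0 ≤ z.im} ζ := by
  have hinner : ContinuousWithinAt (fun x : ℂ => x - (a : ℂ)) {z : ℂ | 0 ≤ z.im} ζ :=
    (continuous_id.sub continuous_const).continuousWithinAt
  by_cases hsl : ζ - (a : ℂ) ∈ Complex.slitPlane
  · exact ContinuousAt.comp_continuousWithinAt (g := Complex.log) (f := fun x : ℂ => x - (a : ℂ))
      (continuousAt_clog hsl) hinner
  · rw [Complex.mem_slitPlane_iff] at hsl
    push_neg at hsl
    have him : (ζ - (a : ℂ)).im = 0 := hsl.2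
    have hre : (ζ - (a : ℂ)).re < 0 := by
      rcases lt_or_eq_of_le hsl.1 with h | h
      · exact h
      · exfalso
        apply hne
        apply Complex.ext <;> simp at him h ⊢ <;> linarith
    refine ContinuousWithinAt.comp (g := Complex.log) (f := fun x : ℂ => x - (a : ℂ))
      (Complex.continuousWithinAt_log_of_re_neg_of_im_zero hre him) hinner ?_
    intro x hx
    simpa using hx

lemma aux_abs_plus_I {ζ : ℂ} (hζ : 0 ≤ ζ.im) : 1 ≤ ‖ζ + Complex.I‖ := by
  have h1 : (ζ + Complex.I).im = ζ.im + 1 := by simp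
  have := Complex.abs_im_le_norm (ζ + Complex.I)
  rw [h1] at this
  have : ζ.im + 1 ≤ |ζ.im + 1| := le_abs_self _
  have := Complex.abs_im_le_norm (ζ + Complex.I)
  rw [h1] at this
  calc (1:ℝ) ≤ ζ.im + 1 := by linarith
  _ ≤ |ζ.im + 1| := le_abs_self _
  _ ≤ ‖ζ + Complex.I‖ := this

lemma aux_abs_le {δ : ℝ} (hδ : 0 < δ) {a : ℝ} (ha : |a| ≤ δ) {ζ : ℂ} (hζ : 0 ≤ ζ.im) :
    ‖ζ - (a : ℂ)‖ ≤ (2 + δ) * ‖ζ + Complex.I‖ := by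
  have h1 : ζ - (a : ℂ) = (ζ + Complex.I) - (Complex.I + (a : ℂ)) := by ring
  have h2 : ‖Complex.I + (a : ℂ)‖ ≤ 1 + δ := by
    calc ‖Complex.I + (a : ℂ)‖ ≤ ‖Complex.I‖ + ‖(a : ℂ)‖ :=
      norm_add_le _ _
    _ = 1 + |a| := by simp
    _ ≤ 1 + δ := by linarith
  have h3 := aux_abs_plus_I hζ
  calc ‖ζ - (a : ℂ)‖ ≤ ‖ζ + Complex.I‖ + ‖Complex.I + (a : ℂ)‖ := by
        rw [h1]
        exact norm_sub_le _ _
  _ ≤ ‖ζ + Complex.I‖ + (1 + δ) * 1 := by linarith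
  _ ≤ ‖ζ + Complex.I‖ + (1 + δ) * ‖ζ + Complex.I‖ := by
        have : 0 ≤ 1 + δ := by linarith
        nlinarith
  _ = (2 + δ) * ‖ζ + Complex.I‖ := by ring

lemma aux_log_le {δ : ℝ} (hδ : 0 < δ) {a : ℝ} (ha : |a| ≤ δ) {ζ : ℂ} (hζ : 0 ≤ ζ.im)
    (hne : ζ ≠ (a : ℂ)) :
    Real.log (‖ζ - (a : ℂ)‖) - Real.log (‖ζ + Complex.I‖)
      ≤ Real.log (2 + δ) := by
  have hpos : 0 < ‖ζ - (a : ℂ)‖ := by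
    rw [norm_pos_iff]
    exact sub_ne_zero.2 hne
  have h3 := aux_abs_plus_I hζ
  have h3' : 0 < ‖ζ + Complex.I‖ := by linarith
  have h2 : 0 < 2 + δ := by linarith
  have := Real.log_le_log hpos (aux_abs_le hδ ha hζ)
  rw [Real.log_mul (by positivity) (by positivity)] at this
  linarith

lemma aux_log_diff (a : ℂ) (ha : a.im ≤ 0) :
    DifferentiableOn ℂ (fun x : ℂ => Complex.log (x - a)) {z : ℂ | 0 < z.im} := by
  intro ζ hζ
  have hζ' : 0 < ζ.im := hζ
  apply DifferentiableAt.differentiableWithinAt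
  have hsl : (ζ - a) ∈ Complex.slitPlane := by
    rw [Complex.mem_slitPlane_iff]
    right
    rw [Complex.sub_im]
    intro hc
    linarith
  exact (Complex.differentiableAt_log hsl).comp ζ (differentiableAt_id.sub_const a)

lemma aux_core (f : ℂ → ℂ) (m δ C S K : ℝ) (hm0 : 0 < m) (hm1 : m < 1) (hδ : 0 < δ)
    (hC : 1 ≤ C) (hS : 0 ≤ S) (hK : 0 < K)
    (hcont : ContinuousOn f {ζ : ℂ | 0 ≤ ζ.im})
    (hhol : DifferentiableOn ℂ f {ζ : ℂ | 0 < ζ.im})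
    (hsmall : ∀ x : ℝ, |x| ≤ δ → ‖f x‖ ≤ K * m)
    (hgrowth : ∀ ζ : ℂ, 0 ≤ ζ.im → ‖f ζ‖ ≤ K * (C * Real.exp (S * ζ.im)))
    (σ : ℝ) :
    ‖f ((σ:ℂ) + Complex.I)‖ ≤
      K * (C * Real.exp S * m ^ ((1/π) * (Real.arctan (σ + δ) - Real.arctan (σ - δ)))) := by
  have hπ : 0 < π := Real.pi_pos
  set s : Set ℂ := {ζ : ℂ | 0 ≤ ζ.im} with hs
  set g : ℂ → ℂ := fun ζ => Complex.exp (Complex.I * (S:ℂ) * ζ) * f ζ with hgdef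
  have habs_g : ∀ ζ : ℂ, ‖g ζ‖ = Real.exp (-(S * ζ.im)) * ‖f ζ‖ := by
    intro ζ
    rw [hgdef]
    simp only [norm_mul, Complex.norm_exp]
    congr 2
    simp [Complex.mul_re, Complex.mul_im]
  have hg_bound : ∀ ζ ∈ s, ‖g ζ‖ ≤ K * C := by
    intro ζ hζ
    rw [habs_g]
    calc Real.exp (-(S * ζ.im)) * ‖f ζ‖
        ≤ Real.exp (-(S * ζ.im)) * (K * (C * Real.exp (S * ζ.im))) := by
          exact mul_le_mul_of_nonneg_left (hgrowth ζ hζ) (Real.exp_pos _).le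
      _ = K * C * (Real.exp (-(S * ζ.im)) * Real.exp (S * ζ.im)) := by ring
      _ = K * C := by rw [← Real.exp_add]; simp
  have hg_small : ∀ x : ℝ, |x| ≤ δ → ‖g (x:ℂ)‖ ≤ K * m := by
    intro x hx
    rw [habs_g]
    simpa using hsmall x hx
  set L : ℝ := -Real.log m with hL
  have hL0 : 0 < L := by
    rw [hL]
    simpa using Real.log_neg hm0 hm1
  have hexpL : Real.exp L = m⁻¹ := by rw [hL, Real.exp_neg, Real.exp_log hm0]
  -- the weight functions
  set E : ℝ → ℂ → ℝ := fun ε ζ =>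
    L / π * (Complex.arg (ζ - (δ:ℂ)) - Complex.arg (ζ + (δ:ℂ))) +
      ε * (Real.log (‖ζ - (δ:ℂ)‖) + Real.log (‖ζ + (δ:ℂ)‖) -
        2 * Real.log (‖ζ + Complex.I‖)) with hE
  set Φ : ℝ → ℂ → ℂ := fun ε ζ =>
    Complex.exp ((-Complex.I * ((L / π : ℝ) : ℂ)) *
        (Complex.log (ζ - (δ:ℂ)) - Complex.log (ζ + (δ:ℂ))) +
      (ε : ℂ) * (Complex.log (ζ - (δ:ℂ)) + Complex.log (ζ + (δ:ℂ)) -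
        2 * Complex.log (ζ + Complex.I))) with hΦ
  have hΦabs : ∀ ε ζ, ‖Φ ε ζ‖ = Real.exp (E ε ζ) := by
    intro ε ζ
    rw [hΦ, Complex.norm_exp, hE]
    congr 1
    simp [Complex.add_re, Complex.mul_re, Complex.sub_re, Complex.sub_im, Complex.add_im,
      Complex.log_re, Complex.log_im, Complex.mul_im]
  set h : ℝ → ℂ → ℂ := fun ε ζ => if ζ = (δ:ℂ) ∨ ζ = -(δ:ℂ) then 0 else g ζ * Φ ε ζ with hh
  -- basic facts about ±δ
  have hδne : ∀ ζ : ℂ, 0 < ζ.im → ¬(ζ = (δ:ℂ) ∨ ζ = -(δ:ℂ)) := by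
    rintro ζ hζ (rfl | rfl) <;> simp at hζ
  -- combined log bound
  have hlog2 : ∀ ζ ∈ s, ζ ≠ (δ:ℂ) → ζ ≠ -(δ:ℂ) →
      Real.log (‖ζ - (δ:ℂ)‖) + Real.log (‖ζ + (δ:ℂ)‖) -
        2 * Real.log (‖ζ + Complex.I‖) ≤ 2 * Real.log (2 + δ) := by
    intro ζ hζ h1 h2
    have hζim : 0 ≤ ζ.im := hζ
    have hd1 : |δ| ≤ δ := by rw [abs_of_pos hδ]
    have hd2 : |(-δ)| ≤ δ := by rw [abs_neg, abs_of_pos hδ]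
    have hl1 : Real.log (‖ζ - (δ:ℂ)‖) - Real.log (‖ζ + Complex.I‖)
        ≤ Real.log (2 + δ) := aux_log_le hδ hd1 hζim h1
    have hl2 : Real.log (‖ζ + (δ:ℂ)‖) - Real.log (‖ζ + Complex.I‖)
        ≤ Real.log (2 + δ) := by
      have he : ζ + (δ:ℂ) = ζ - ((-δ : ℝ):ℂ) := by push_cast; ring
      rw [he]
      refine aux_log_le hδ hd2 hζim ?_
      intro hc
      apply h2
      rw [Complex.ofReal_neg] at hc
      exact hc
    linarith
  -- arg difference bound
  have hargdiff : ∀ ζ ∈ s, L / π * (Complex.arg (ζ - (δ:ℂ)) - Complex.arg (ζ + (δ:ℂ))) ≤ L := by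
    intro ζ hζ
    have hζim : 0 ≤ ζ.im := hζ
    have ha1 : Complex.arg (ζ - (δ:ℂ)) ≤ π := Complex.arg_le_pi _
    have ha2 : 0 ≤ Complex.arg (ζ + (δ:ℂ)) := by
      rw [Complex.arg_nonneg_iff]
      simpa using hζim
    have h0 : 0 ≤ L / π := by positivity
    calc L / π * (Complex.arg (ζ - (δ:ℂ)) - Complex.arg (ζ + (δ:ℂ)))
        ≤ L / π * π := by
          apply mul_le_mul_of_nonneg_left _ h0
          linarith
      _ = L := by field_simp
  -- global bound on E
  have hE_glob : ∀ ε : ℝ, 0 ≤ ε → ∀ ζ ∈ s, ζ ≠ (δ:ℂ) → ζ ≠ -(δ:ℂ) →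
      E ε ζ ≤ L + ε * (2 * Real.log (2 + δ)) := by
    intro ε hε ζ hζ h1 h2
    have hterm1 := hargdiff ζ hζ
    have hterm2 := mul_le_mul_of_nonneg_left (hlog2 ζ hζ h1 h2) hε
    rw [hE]
    dsimp only
    linarith
  -- boundary bound
  have hbdry : ∀ ε : ℝ, 0 ≤ ε → ∀ x : ℝ,
      ‖h ε (x:ℂ)‖ ≤ K * C * Real.exp (ε * (2 * Real.log (2 + δ))) := by
    intro ε hε x
    by_cases hb : (x:ℂ) = (δ:ℂ) ∨ (x:ℂ) = -(δ:ℂ)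
    · rw [hh]; simp only [hb, if_true, norm_zero]
      positivity
    · push_neg at hb
      have hxs : (x:ℂ) ∈ s := by rw [hs]; simp
      have hlogb := mul_le_mul_of_nonneg_left (hlog2 (x:ℂ) hxs hb.1 hb.2) hε
      rw [hh]
      simp only [hb.1, hb.2, or_self, if_false, norm_mul, hΦabs]
      have hx1 : x ≠ δ := fun hc => hb.1 (by rw [hc])
      have hx2 : x ≠ -δ := fun hc => hb.2 (by rw [hc]; push_cast; ring)
      have he1 : (x:ℂ) - (δ:ℂ) = ((x - δ : ℝ):ℂ) := by push_cast; ring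
      have he2 : (x:ℂ) + (δ:ℂ) = ((x + δ : ℝ):ℂ) := by push_cast; ring
      by_cases hxx : |x| ≤ δ
      · -- small segment: arg difference is π
        have hlt : x - δ < 0 := by
          rcases abs_le.1 hxx with ⟨_, h⟩
          cases lt_or_eq_of_le h with
          | inl h => linarith
          | inr h => exact absurd h hx1
        have hgt : 0 < x + δ := by
          rcases abs_le.1 hxx with ⟨h, _⟩
          cases lt_or_eq_of_le h with
          | inl h => linarith
          | inr h => exact absurd h.symm (by intro hc; exact hx2 (by linarith))
        have harg1 : Complex.arg ((x:ℂ) - (δ:ℂ)) = π := by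
          rw [he1]; exact Complex.arg_ofReal_of_neg hlt
        have harg2 : Complex.arg ((x:ℂ) + (δ:ℂ)) = 0 := by
          rw [he2]; exact Complex.arg_ofReal_of_nonneg hgt.le
        have hEval : E ε (x:ℂ) ≤ L + ε * (2 * Real.log (2 + δ)) := by
          rw [hE]; dsimp only
          rw [harg1, harg2]
          have : L / π * (π - 0) = L := by field_simp; ring
          rw [this]
          linarith
        calc ‖g (x:ℂ)‖ * Real.exp (E ε (x:ℂ))
            ≤ (K * m) * Real.exp (L + ε * (2 * Real.log (2 + δ))) := by
              apply mul_le_mul (hg_small x hxx) (Real.exp_le_exp.2 hEval) (Real.exp_pos _).le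
              positivity
          _ = K * (m * m⁻¹) * Real.exp (ε * (2 * Real.log (2 + δ))) := by
              rw [Real.exp_add, hexpL]; ring
          _ = K * Real.exp (ε * (2 * Real.log (2 + δ))) := by
              rw [mul_inv_cancel₀ hm0.ne']; ring
          _ ≤ K * C * Real.exp (ε * (2 * Real.log (2 + δ))) := by
              have h0 := Real.exp_pos (ε * (2 * Real.log (2 + δ)))
              nlinarith [mul_nonneg (mul_nonneg hK.le h0.le) (sub_nonneg.2 hC)]
      · -- outside segment: arg difference is 0
        push_neg at hxx
        have harg : Complex.arg ((x:ℂ) - (δ:ℂ)) = Complex.arg ((x:ℂ) + (δ:ℂ)) := by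
          rcases lt_abs.1 hxx with hgt | hgt
          · rw [he1, he2, Complex.arg_ofReal_of_nonneg (by linarith),
              Complex.arg_ofReal_of_nonneg (by linarith)]
          · rw [he1, he2, Complex.arg_ofReal_of_neg (by linarith),
              Complex.arg_ofReal_of_neg (by linarith)]
        have hEval : E ε (x:ℂ) ≤ ε * (2 * Real.log (2 + δ)) := by
          rw [hE]; dsimp only
          rw [harg, sub_self, mul_zero, zero_add]
          linarith
        calc ‖g (x:ℂ)‖ * Real.exp (E ε (x:ℂ))
            ≤ (K * C) * Real.exp (ε * (2 * Real.log (2 + δ))) := by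
              apply mul_le_mul (hg_bound (x:ℂ) hxs) (Real.exp_le_exp.2 hEval) (Real.exp_pos _).le
              positivity
          _ = K * C * Real.exp (ε * (2 * Real.log (2 + δ))) := by ring
  -- global bound
  have hglob : ∀ ε : ℝ, 0 ≤ ε → ∀ ζ ∈ s,
      ‖h ε ζ‖ ≤ K * C * Real.exp (L + ε * (2 * Real.log (2 + δ))) := by
    intro ε hε ζ hζ
    by_cases hb : ζ = (δ:ℂ) ∨ ζ = -(δ:ℂ)
    · rw [hh]; simp only [hb, if_true, norm_zero]
      positivity
    · push_neg at hb
      rw [hh]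
      simp only [hb.1, hb.2, or_self, if_false, norm_mul, hΦabs]
      calc ‖g ζ‖ * Real.exp (E ε ζ)
          ≤ (K * C) * Real.exp (L + ε * (2 * Real.log (2 + δ))) := by
            apply mul_le_mul (hg_bound ζ hζ)
              (Real.exp_le_exp.2 (hE_glob ε hε ζ hζ hb.1 hb.2)) (Real.exp_pos _).le
            positivity
        _ = K * C * Real.exp (L + ε * (2 * Real.log (2 + δ))) := by ring
  -- near-boundary-point bound
  have hM0 : 0 ≤ K * C * Real.exp L * Real.exp 1 := by positivity
  have hnear : ∀ ε : ℝ, 0 < ε → ∀ a : ℝ, |a| = δ → ∀ x ∈ s,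
      ‖h ε x‖ ≤
        (K * C * Real.exp L * Real.exp (ε * Real.log (2 + δ))) *
          ‖x - (a:ℂ)‖ ^ ε := by
    intro ε hε a ha x hx
    by_cases hbx : x = (δ:ℂ) ∨ x = -(δ:ℂ)
    · rw [hh]; simp only [hbx, if_true, norm_zero]
      have := Real.rpow_nonneg (norm_nonneg (x - (a:ℂ))) ε
      positivity
    · push_neg at hbx
      rw [hh]
      simp only [hbx.1, hbx.2, or_self, if_false, norm_mul, hΦabs]
      have hxim : 0 ≤ x.im := hx
      have hxa : x ≠ (a:ℂ) := by
        rcases (abs_eq hδ.le).1 ha with ha1 | ha1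
        · rw [ha1]; exact hbx.1
        · rw [ha1]; intro hc; apply hbx.2; rw [hc]; push_cast; ring
      have habs_pos : 0 < ‖x - (a:ℂ)‖ := by
        rw [norm_pos_iff]; exact sub_ne_zero.2 hxa
      have hIlog : 0 ≤ Real.log (‖x + Complex.I‖) :=
        Real.log_nonneg (aux_abs_plus_I hxim)
      have hd1 : |δ| ≤ δ := by rw [abs_of_pos hδ]
      have hd2 : |(-δ)| ≤ δ := by rw [abs_neg, abs_of_pos hδ]
      -- log-part bound: ≤ log |x - a| + log (2+δ)
      have hlogpart : Real.log (‖x - (δ:ℂ)‖) + Real.log (‖x + (δ:ℂ)‖) -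
          2 * Real.log (‖x + Complex.I‖) ≤
            Real.log (‖x - (a:ℂ)‖) + Real.log (2 + δ) := by
        rcases (abs_eq hδ.le).1 ha with ha1 | ha1
        · rw [ha1]
          have k1 : Real.log (‖x + (δ:ℂ)‖) - Real.log (‖x + Complex.I‖)
              ≤ Real.log (2 + δ) := by
            have he : x + (δ:ℂ) = x - ((-δ : ℝ):ℂ) := by push_cast; ring
            rw [he]
            refine aux_log_le hδ hd2 hxim ?_
            intro hc; apply hbx.2; rw [Complex.ofReal_neg] at hc; exact hc
          linarith
        · rw [ha1]
          have k1 : Real.log (‖x - (δ:ℂ)‖) - Real.log (‖x + Complex.I‖)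
              ≤ Real.log (2 + δ) := aux_log_le hδ hd1 hxim hbx.1
          have he : x - ((-δ:ℝ):ℂ) = x + (δ:ℂ) := by push_cast; ring
          rw [he]
          linarith
      have hEb : E ε x ≤ L + ε * (Real.log (‖x - (a:ℂ)‖) + Real.log (2 + δ)) := by
        rw [hE]; dsimp only
        have := mul_le_mul_of_nonneg_left hlogpart hε.le
        linarith [hargdiff x hx]
      calc ‖g x‖ * Real.exp (E ε x)
          ≤ (K * C) * Real.exp (L + ε * (Real.log (‖x - (a:ℂ)‖) + Real.log (2 + δ))) := by
            apply mul_le_mul (hg_bound x hx) (Real.exp_le_exp.2 hEb) (Real.exp_pos _).le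
            positivity
        _ = (K * C * Real.exp L * Real.exp (ε * Real.log (2 + δ))) *
              Real.exp (Real.log (‖x - (a:ℂ)‖) * ε) := by
            rw [show L + ε * (Real.log (‖x - (a:ℂ)‖) + Real.log (2 + δ)) =
              L + ε * Real.log (2 + δ) + Real.log (‖x - (a:ℂ)‖) * ε from by ring,
              Real.exp_add, Real.exp_add]
            ring
        _ = (K * C * Real.exp L * Real.exp (ε * Real.log (2 + δ))) *
              ‖x - (a:ℂ)‖ ^ ε := by
            rw [Real.rpow_def_of_pos habs_pos]
  -- continuity of h ε on s
  have hcont_h : ∀ ε : ℝ, 0 < ε → ContinuousOn (h ε) s := by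
    intro ε hε ζ hζ
    by_cases hb : ζ = (δ:ℂ) ∨ ζ = -(δ:ℂ)
    · -- boundary points ±δ : h tends to 0
      obtain ⟨a, haδ, rfl⟩ : ∃ a : ℝ, |a| = δ ∧ ζ = (a:ℂ) := by
        rcases hb with rfl | rfl
        · exact ⟨δ, abs_of_pos hδ, rfl⟩
        · exact ⟨-δ, by rw [abs_neg, abs_of_pos hδ], by push_cast; ring⟩
      have hval : h ε ((a:ℝ):ℂ) = 0 := by rw [hh]; dsimp only; rw [if_pos hb]
      unfold ContinuousWithinAt
      rw [hval]
      set M := K * C * Real.exp L * Real.exp (ε * Real.log (2 + δ)) with hMdef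
      have t1 : Filter.Tendsto (fun x : ℂ => ‖x - ((a:ℝ):ℂ)‖)
          (nhdsWithin ((a:ℝ):ℂ) s) (nhds 0) := by
        have hcts : Continuous fun x : ℂ => ‖x - ((a:ℝ):ℂ)‖ :=
          continuous_norm.comp (continuous_id.sub continuous_const)
        have := hcts.tendsto ((a:ℝ):ℂ)
        simp only [sub_self, norm_zero] at this
        exact this.mono_left nhdsWithin_le_nhds
      have t2 : Filter.Tendsto (fun v : ℝ => M * v ^ ε) (nhds 0) (nhds 0) := by
        have hc : ContinuousAt (fun v : ℝ => v ^ ε) 0 :=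
          Real.continuousAt_rpow_const 0 ε (Or.inr hε.le)
        have h2 := hc.tendsto
        rw [Real.zero_rpow hε.ne'] at h2
        have h3 := h2.const_mul M
        simpa using h3
      refine squeeze_zero_norm' ?_ (t2.comp t1)
      refine eventually_nhdsWithin_of_forall fun x hx => ?_
      exact hnear ε hε a haδ x hx
    · -- interior-of-boundary points: continuity by composition
      push_neg at hb
      have c1 : ContinuousWithinAt (fun x : ℂ => Complex.log (x - (δ:ℂ))) s ζ :=
        aux_log_cwa δ hζ hb.1
      have c2 : ContinuousWithinAt (fun x : ℂ => Complex.log (x + (δ:ℂ))) s ζ := by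
        have hfun : (fun x : ℂ => Complex.log (x - ((-δ:ℝ):ℂ))) =
            fun x : ℂ => Complex.log (x + (δ:ℂ)) := by
          funext x; congr 1; push_cast; ring
        have := aux_log_cwa (-δ) hζ (by rw [Complex.ofReal_neg]; exact hb.2)
        rwa [hfun] at this
      have c3 : ContinuousWithinAt (fun x : ℂ => Complex.log (x + Complex.I)) s ζ := by
        have hsl : ζ + Complex.I ∈ Complex.slitPlane := by
          rw [Complex.mem_slitPlane_iff]
          right
          rw [Complex.add_im, Complex.I_im]
          have : (0:ℝ) ≤ ζ.im := hζ
          intro hc; linarith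
        exact ContinuousAt.comp_continuousWithinAt (g := Complex.log)
          (f := fun x : ℂ => x + Complex.I) (continuousAt_clog hsl)
          ((continuous_id.add continuous_const).continuousWithinAt)
      have cg : ContinuousWithinAt g s ζ := by
        rw [hgdef]
        exact ((Complex.continuous_exp.comp
          (continuous_const.mul continuous_id)).continuousWithinAt).mul (hcont ζ hζ)
      have cΦ : ContinuousWithinAt (Φ ε) s ζ := by
        rw [hΦ]
        apply ContinuousAt.comp_continuousWithinAt Complex.continuous_exp.continuousAt
        exact ((c1.sub c2).const_mul _).add (((c1.add c2).sub (c3.const_mul 2)).const_mul _)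
      have hnb : {x : ℂ | ¬(x = (δ:ℂ) ∨ x = -(δ:ℂ))} ∈ nhds ζ := by
        have hclosed : IsClosed ({(δ:ℂ)} ∪ {-(δ:ℂ)} : Set ℂ) :=
          isClosed_singleton.union isClosed_singleton
        have heq : {x : ℂ | ¬(x = (δ:ℂ) ∨ x = -(δ:ℂ))} = (({(δ:ℂ)} ∪ {-(δ:ℂ)} : Set ℂ))ᶜ := by
          ext x; simp [not_or]; tauto
        rw [heq]
        exact hclosed.isOpen_compl.mem_nhds (by simp [not_or, hb.1, hb.2])
      refine (cg.mul cΦ).congr_of_eventuallyEq ?_ ?_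
      · filter_upwards [Filter.mem_inf_of_left hnb] with x hx
        rw [hh]; dsimp only; rw [if_neg hx]; rfl
      · rw [hh]; dsimp only; rw [if_neg (by push_neg; exact hb)]; rfl
  -- differentiability
  have hdiff_h : ∀ ε : ℝ, DifferentiableOn ℂ (h ε) {ζ : ℂ | 0 < ζ.im} := by
    intro ε
    have l1 : DifferentiableOn ℂ (fun x : ℂ => Complex.log (x - (δ:ℂ))) {z : ℂ | 0 < z.im} :=
      aux_log_diff (δ:ℂ) (by simp)
    have l2 : DifferentiableOn ℂ (fun x : ℂ => Complex.log (x + (δ:ℂ))) {z : ℂ | 0 < z.im} := by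
      have := aux_log_diff (-(δ:ℂ)) (by simp)
      refine this.congr fun x hx => ?_
      rw [sub_neg_eq_add]
    have l3 : DifferentiableOn ℂ (fun x : ℂ => Complex.log (x + Complex.I)) {z : ℂ | 0 < z.im} := by
      have := aux_log_diff (-Complex.I) (by simp)
      refine this.congr fun x hx => ?_
      rw [sub_neg_eq_add]
    have hgd : DifferentiableOn ℂ g {ζ : ℂ | 0 < ζ.im} := by
      rw [hgdef]
      exact ((differentiable_id.const_mul (Complex.I * (S:ℂ))).cexp.differentiableOn).mul hhol
    have hΦd : DifferentiableOn ℂ (Φ ε) {ζ : ℂ | 0 < ζ.im} := by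
      rw [hΦ]
      apply DifferentiableOn.cexp
      exact ((l1.sub l2).const_mul _).add (((l1.add l2).sub (l3.const_mul 2)).const_mul _)
    refine (hgd.mul hΦd).congr fun ζ hζ => ?_
    rw [hh]
    dsimp only
    rw [if_neg (hδne ζ hζ)]; rfl
  -- the point
  set ζ₀ : ℂ := (σ:ℂ) + Complex.I with hζ₀
  have hζ₀im : ζ₀.im = 1 := by rw [hζ₀]; simp
  have hζ₀s : ζ₀ ∈ s := by rw [hs]; simp [hζ₀im]
  have hζ₀ne : ¬(ζ₀ = (δ:ℂ) ∨ ζ₀ = -(δ:ℂ)) := hδne ζ₀ (by rw [hζ₀im]; norm_num)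
  set Q : ℝ := Real.log (‖ζ₀ - (δ:ℂ)‖) + Real.log (‖ζ₀ + (δ:ℂ)‖) -
      2 * Real.log (‖ζ₀ + Complex.I‖) with hQ
  set A : ℝ := Complex.arg (ζ₀ - (δ:ℂ)) - Complex.arg (ζ₀ + (δ:ℂ)) with hA
  -- Phragmen-Lindelof application
  have key : ∀ ε : ℝ, 0 < ε → ‖h ε ζ₀‖ ≤
      K * C * Real.exp (ε * (2 * Real.log (2 + δ))) := by
    intro ε hε
    set φ : ℂ → ℂ := fun z => h ε (Complex.I * z) with hφ
    have him_re : ∀ z : ℂ, (Complex.I * z).im = z.re := by intro z; simp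
    have hmaps : Set.MapsTo (fun z : ℂ => Complex.I * z) {z : ℂ | 0 ≤ z.re} s := by
      intro z hz
      rw [hs]
      simp only [Set.mem_setOf_eq, him_re]
      exact hz
    have hd : DiffContOnCl ℂ φ {z : ℂ | 0 < z.re} := by
      constructor
      · refine (hdiff_h ε).comp ((differentiable_const _).mul differentiable_id).differentiableOn
          fun z hz => ?_
        simp only [Set.mem_setOf_eq, him_re]
        exact hz
      · rw [Complex.closure_setOf_lt_re]
        exact (hcont_h ε hε).comp (continuous_const.mul continuous_id).continuousOn hmaps
    have hMg : ∀ z : ℂ, 0 ≤ z.re →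
        ‖φ z‖ ≤ K * C * Real.exp (L + ε * (2 * Real.log (2 + δ))) := by
      intro z hz
      rw [hφ]
      dsimp only
      apply hglob ε hε.le
      rw [hs]
      simp only [Set.mem_setOf_eq, him_re]
      exact hz
    have hB := PhragmenLindelof.right_half_plane_of_bounded_on_real hd
      ⟨1, one_lt_two, 0, Asymptotics.IsBigO.of_bound
        (K * C * Real.exp (L + ε * (2 * Real.log (2 + δ))))
        (Filter.eventually_inf_principal.2 (Filter.Eventually.of_forall fun z hz => by
          have h1 := hMg z (le_of_lt hz)
          simpa using h1))⟩
      (Filter.isBoundedUnder_of_eventually_le (a := K * C * Real.exp (L + ε * (2 * Real.log (2 + δ))))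
        (by
          filter_upwards [Filter.eventually_ge_atTop (0:ℝ)] with x hx
          exact hMg (x:ℂ) (by simp [hx])))
      (fun x => by
        have hrw : Complex.I * ((x:ℂ) * Complex.I) = ((-x:ℝ):ℂ) := by
          rw [mul_comm, mul_assoc, Complex.I_mul_I]
          push_cast; ring
        rw [hφ]
        dsimp only
        rw [hrw]
        exact hbdry ε hε.le (-x))
      (z := -Complex.I * ζ₀)
      (by rw [hζ₀]; simp)
    have hrw2 : Complex.I * (-Complex.I * ζ₀) = ζ₀ := by
      rw [← mul_assoc, mul_neg, Complex.I_mul_I, neg_neg, one_mul]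
    rw [hφ] at hB
    dsimp only at hB
    rw [hrw2] at hB
    exact hB
  have key2 : ∀ ε : ℝ, 0 < ε → ‖g ζ₀‖ ≤
      K * C * Real.exp (ε * (2 * Real.log (2 + δ)) - ε * Q) * Real.exp (-(L / π * A)) := by
    intro ε hε
    have h1 := key ε hε
    rw [hh] at h1
    simp only [hζ₀ne, if_false, norm_mul, hΦabs] at h1
    have hEeq : E ε ζ₀ = L / π * A + ε * Q := by rw [hE, hA, hQ]
    rw [hEeq] at h1
    have := mul_le_mul_of_nonneg_right h1 (Real.exp_pos (-(L / π * A + ε * Q))).le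
    calc ‖g ζ₀‖
        = ‖g ζ₀‖ * (Real.exp (L / π * A + ε * Q) *
            Real.exp (-(L / π * A + ε * Q))) := by
          have hz : L / π * A + ε * Q + -(L / π * A + ε * Q) = 0 := by ring
          rw [← Real.exp_add, hz, Real.exp_zero, mul_one]
      _ = ‖g ζ₀‖ * Real.exp (L / π * A + ε * Q) *
            Real.exp (-(L / π * A + ε * Q)) := by ring
      _ ≤ K * C * Real.exp (ε * (2 * Real.log (2 + δ))) * Real.exp (-(L / π * A + ε * Q)) := this
      _ = K * C * Real.exp (ε * (2 * Real.log (2 + δ)) - ε * Q) * Real.exp (-(L / π * A)) := by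
          rw [mul_assoc (K * C), ← Real.exp_add, mul_assoc (K * C), ← Real.exp_add]
          congr 2
          ring
  -- take the limit ε → 0⁺
  have hlim : ‖g ζ₀‖ ≤ K * C * Real.exp (-(L / π * A)) := by
    have htend : Filter.Tendsto
        (fun ε : ℝ => K * C * Real.exp (ε * (2 * Real.log (2 + δ)) - ε * Q) *
          Real.exp (-(L / π * A))) (nhdsWithin 0 (Set.Ioi 0))
        (nhds (K * C * Real.exp (-(L / π * A)))) := by
      have : Continuous (fun ε : ℝ => K * C * Real.exp (ε * (2 * Real.log (2 + δ)) - ε * Q) *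
          Real.exp (-(L / π * A))) :=
        ((continuous_const.mul (Real.continuous_exp.comp
          ((continuous_id.mul continuous_const).sub
            (continuous_id.mul continuous_const)))).mul continuous_const)
      have h0 := this.tendsto 0
      simp only [zero_mul, sub_zero, Real.exp_zero, mul_one] at h0
      exact h0.mono_left nhdsWithin_le_nhds
    refine ge_of_tendsto htend ?_
    filter_upwards [self_mem_nhdsWithin] with ε hε
    exact key2 ε hε
  -- identify the exponent
  have hAval : A = Real.arctan (σ + δ) - Real.arctan (σ - δ) := by
    have e1 : ζ₀ - (δ:ℂ) = ((σ - δ : ℝ):ℂ) + Complex.I := by rw [hζ₀]; push_cast; ring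
    have e2 : ζ₀ + (δ:ℂ) = ((σ + δ : ℝ):ℂ) + Complex.I := by rw [hζ₀]; push_cast; ring
    rw [hA, e1, e2, aux_arg, aux_arg]
    ring
  have hrpow : Real.exp (-(L / π * A)) =
      m ^ ((1/π) * (Real.arctan (σ + δ) - Real.arctan (σ - δ))) := by
    rw [Real.rpow_def_of_pos hm0, hAval, hL]
    congr 1
    field_simp
  -- conclude
  have hfg : ‖f ζ₀‖ = Real.exp S * ‖g ζ₀‖ := by
    rw [habs_g, hζ₀im]
    rw [← mul_assoc, ← Real.exp_add]
    simp
  rw [hfg, ← hrpow]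
  calc Real.exp S * ‖g ζ₀‖ ≤ Real.exp S * (K * C * Real.exp (-(L / π * A))) :=
      mul_le_mul_of_nonneg_left hlim (Real.exp_pos _).le
    _ = K * (C * Real.exp S * Real.exp (-(L / π * A))) := by ring

/-- Two-constants / Phragmén–Lindelöf bound for a weakly holomorphic Hilbert-space valued
function in the upper half-plane: smallness on a boundary segment propagates to the line
`Im ζ = 1`. -/
theorem weakly_holomorphic_two_constants
    {H : Type*} [NormedAddCommGroup H] [InnerProductSpace ℂ H] [CompleteSpace H]
    (F : ℂ → H) (m δ C S : ℝ) (hm0 : 0 < m) (hm1 : m < 1) (hδ : 0 < δ)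
    (hC : 1 ≤ C) (hS : 0 ≤ S)
    (hcont : ∀ v : H, ContinuousOn (fun ζ : ℂ => (inner ℂ v (F ζ) : ℂ)) {ζ : ℂ | 0 ≤ ζ.im})
    (hhol : ∀ v : H, DifferentiableOn ℂ (fun ζ : ℂ => (inner ℂ v (F ζ) : ℂ)) {ζ : ℂ | 0 < ζ.im})
    (hsmall : ∀ σ : ℝ, |σ| ≤ δ → ‖F (σ : ℂ)‖ ≤ m)
    (hgrowth : ∀ σ η : ℝ, 0 ≤ η → ‖F ((σ : ℂ) + Complex.I * (η : ℂ))‖ ≤ C * Real.exp (S * η)) :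
    ∀ σ : ℝ, ‖F ((σ : ℂ) + Complex.I)‖ ≤
      C * Real.exp S * m ^ ((1 / π) * (Real.arctan (σ + δ) - Real.arctan (σ - δ))) := by
  intro σ
  by_cases hv : F ((σ:ℂ) + Complex.I) = 0
  · rw [hv, norm_zero]
    positivity
  · set v : H := F ((σ:ℂ) + Complex.I) with hvdef
    have hK : 0 < ‖v‖ := norm_pos_iff.2 hv
    have hcore := aux_core (fun ζ => (inner ℂ v (F ζ) : ℂ)) m δ C S ‖v‖ hm0 hm1 hδ hC hS hK
      (hcont v) (hhol v)
      (fun x hx => by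
        calc ‖(inner ℂ v (F (x:ℂ)) : ℂ)‖ ≤ ‖v‖ * ‖F (x:ℂ)‖ := norm_inner_le_norm _ _
          _ ≤ ‖v‖ * m := mul_le_mul_of_nonneg_left (hsmall x hx) hK.le)
      (fun ζ hζ => by
        have hrw : ((ζ.re:ℝ):ℂ) + Complex.I * ((ζ.im:ℝ):ℂ) = ζ := by
          rw [mul_comm]; exact Complex.re_add_im ζ
        calc ‖(inner ℂ v (F ζ) : ℂ)‖ ≤ ‖v‖ * ‖F ζ‖ := norm_inner_le_norm _ _
          _ ≤ ‖v‖ * (C * Real.exp (S * ζ.im)) := by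
            apply mul_le_mul_of_nonneg_left _ hK.le
            have h2 := hgrowth ζ.re ζ.im hζ
            rwa [hrw] at h2)
      σ
    have hself : ‖(inner ℂ v (F ((σ:ℂ) + Complex.I)) : ℂ)‖ = ‖v‖ ^ 2 := by
      rw [← hvdef, inner_self_eq_norm_sq_to_K]
      push_cast
      simp [norm_pow]
    rw [hself] at hcore
    have := mul_le_mul_of_nonneg_left hcore (le_of_lt (inv_pos.2 hK))
    calc ‖F ((σ:ℂ) + Complex.I)‖ = ‖v‖ := by rw [hvdef]
      _ ≤ C * Real.exp S * m ^ ((1 / π) * (Real.arctan (σ + δ) - Real.arctan (σ - δ))) := by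
        nlinarith [hcore, hK, sq_nonneg ‖v‖]
end
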